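/- The worst-case approximation ratio (over all n and m) of the weighted k-sortition rule is at least 3/2 − (1/2)(3/4)^k ≥ 9/8 for every committee size k ≥ 1. -/

import Mathlib

open Finset BigOperators

noncomputable section

/-- Hamming distance between two preference vectors over `m` binary issues. -/
def hamming {m : ℕ} (x y : Fin m → Bool) : ℕ :=
  (Finset.univ.filter fun j => x j ≠ y j).card

/-- Social cost of outcome `z` on profile `X`: sum of Hamming distances. -/
def SC {n m : ℕ} (X : Fin n → Fin m → Bool) (z : Fin m → Bool) : ℕ :=
  ∑ i, hamming (X i) z

/-- Optimal (minimal) social cost over all outcomes. -/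
def optCost {n m : ℕ} (X : Fin n → Fin m → Bool) : ℕ :=
  Finset.univ.inf' Finset.univ_nonempty fun z : Fin m → Bool => SC X z

/-- Number of voters preferring alternative 1 (`true`) on issue `j`. -/
def trueCount {n m : ℕ} (X : Fin n → Fin m → Bool) (j : Fin m) : ℕ :=
  (Finset.univ.filter fun i => X i j = true).card

/-- Number of voters preferring alternative 0 (`false`) on issue `j`. -/
def falseCount {n m : ℕ} (X : Fin n → Fin m → Bool) (j : Fin m) : ℕ :=
  (Finset.univ.filter fun i => X i j = false).card

/-- Expected social cost of `k`-sortition: a uniformly random committee of size `k`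
decides each issue by simple majority, ties broken uniformly at random. -/
def sortitionCost (k : ℕ) {n m : ℕ} (X : Fin n → Fin m → Bool) : ℝ :=
  (∑ C ∈ Finset.powersetCard k (Finset.univ : Finset (Fin n)), ∑ j : Fin m,
      (if k < 2 * (C.filter fun i => X i j = true).card then (falseCount X j : ℝ)
       else if 2 * (C.filter fun i => X i j = true).card < k then (trueCount X j : ℝ)
       else (n : ℝ) / 2)) / (n.choose k : ℝ)

/-- Ratio of an (expected) cost to the optimal cost, with the convention `0/0 = 1`. -/
def ratio (cost : ℝ) (opt : ℕ) : ℝ := if opt = 0 then 1 else cost / (opt : ℝ)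

/-- Worst-case approximation ratio of `k`-sortition over profiles with `n` voters, `m` issues. -/
def sortitionAR (n m k : ℕ) : ℝ :=
  ⨆ X : Fin n → Fin m → Bool, ratio (sortitionCost k X) (optCost X)

/-- The set of committee members of `C` closest (in Hamming distance) to voter `i`. -/
def closestSet {n m : ℕ} (X : Fin n → Fin m → Bool) (C : Finset (Fin n)) (i : Fin n) :
    Finset (Fin n) :=
  C.filter fun c => ∀ c' ∈ C, hamming (X i) (X c) ≤ hamming (X i) (X c')

/-- Weight of committee member `c`: each voter splits one unit of weight equally among
their closest committee members. -/
def wWeight {n m : ℕ} (X : Fin n → Fin m → Bool) (C : Finset (Fin n)) (c : Fin n) : ℝ :=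
  ∑ i : Fin n, if c ∈ closestSet X C i then 1 / ((closestSet X C i).card : ℝ) else 0

/-- Expected social cost of the decision of committee `C` under weighted majority
(per issue, ties broken uniformly). -/
def wCost {n m : ℕ} (X : Fin n → Fin m → Bool) (C : Finset (Fin n)) : ℝ :=
  ∑ j : Fin m,
    (if (∑ c ∈ C.filter (fun c => X c j = false), wWeight X C c)
          < (∑ c ∈ C.filter (fun c => X c j = true), wWeight X C c)
        then (falseCount X j : ℝ)
     else if (∑ c ∈ C.filter (fun c => X c j = true), wWeight X C c)
          < (∑ c ∈ C.filter (fun c => X c j = false), wWeight X C c)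
        then (trueCount X j : ℝ)
     else (n : ℝ) / 2)

/-- Expected social cost of weighted `k`-sortition: uniformly random committee of size `k`,
weighted majority vote per issue. -/
def wSortitionCost (k : ℕ) {n m : ℕ} (X : Fin n → Fin m → Bool) : ℝ :=
  (∑ C ∈ Finset.powersetCard k (Finset.univ : Finset (Fin n)), wCost X C) / (n.choose k : ℝ)

/-- Worst-case approximation ratio of weighted `k`-sortition. -/
def wSortitionAR (n m k : ℕ) : ℝ :=
  ⨆ X : Fin n → Fin m → Bool, ratio (wSortitionCost k X) (optCost X)

/-!
Take `3 s` clique voters, each approving only a private block of `d + 1` issues, and `s` hub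
voters approving only `d` further issues. Clique voters are at distance `2 d + 2` from each other
but `2 d + 1` from the hub, so a clique member of a committee `C` is closest to itself alone, while
every other voter is closest to the hub members of `C`. If `C` meets the hub and `2 |C| < n`, the
hub therefore carries the weighted majority on its `d` issues, where the outcome costs `3 s`
instead of the optimal `s`. The optimum is `s (4 d + 3)`, and a random `k`-committee misses the
hub with probability `C(3s, k) / C(4s, k) ≤ (3/4)^k`; so the expected ratio is at least
`1 + (1 - (3/4)^k) · 2 d / (4 d + 3)`, which tends to `3/2 - (3/4)^k / 2` as `d → ∞`.
-/

section Costs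

variable {n m : ℕ} (X : Fin n → Fin m → Bool)

theorem hamming_self (x : Fin m → Bool) : hamming x x = 0 := by
  simp [hamming]

theorem hamming_comm (x y : Fin m → Bool) : hamming x y = hamming y x := by
  simp only [hamming, ne_comm]

theorem trueCount_add_falseCount (j : Fin m) : trueCount X j + falseCount X j = n := by
  simpa [trueCount, falseCount] using
    card_filter_add_card_filter_not (s := univ) (p := fun i => X i j = true)

theorem SC_eq_sum (z : Fin m → Bool) :
    SC X z = ∑ j, if z j then falseCount X j else trueCount X j := by
  simp only [SC, hamming, card_filter]
  rw [sum_comm]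
  refine sum_congr rfl fun j _ => ?_
  cases z j <;> simp only [trueCount, falseCount, card_filter] <;> simp

theorem optCost_eq_sum_min : optCost X = ∑ j, min (trueCount X j) (falseCount X j) := by
  refine le_antisymm ?_ (le_inf' _ _ fun z _ => ?_)
  · calc optCost X ≤ SC X fun j => decide (falseCount X j < trueCount X j) :=
          inf'_le _ (mem_univ _)
      _ = _ := by
        rw [SC_eq_sum]
        refine sum_congr rfl fun j _ => ?_
        by_cases h : falseCount X j < trueCount X j <;> simp [h, min_def]
  · rw [SC_eq_sum]
    gcongr with j
    split <;> simp

def wTally (C : Finset (Fin n)) (j : Fin m) (v : Bool) : ℝ :=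
  ∑ c ∈ C.filter (fun c => X c j = v), wWeight X C c

def wIssueCost (C : Finset (Fin n)) (j : Fin m) : ℝ :=
  if wTally X C j false < wTally X C j true then (falseCount X j : ℝ)
  else if wTally X C j true < wTally X C j false then (trueCount X j : ℝ)
  else (n : ℝ) / 2

theorem wCost_eq_sum_wIssueCost (C : Finset (Fin n)) : wCost X C = ∑ j, wIssueCost X C j := rfl

theorem min_le_wIssueCost (C : Finset (Fin n)) (j : Fin m) :
    min (trueCount X j : ℝ) (falseCount X j) ≤ wIssueCost X C j := by
  have hsum : (trueCount X j : ℝ) + falseCount X j = n := by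
    exact_mod_cast trueCount_add_falseCount X j
  unfold wIssueCost
  split_ifs
  · exact min_le_right _ _
  · exact min_le_left _ _
  · linarith [min_le_left (trueCount X j : ℝ) (falseCount X j),
      min_le_right (trueCount X j : ℝ) (falseCount X j)]

theorem optCost_add_sum_le_wCost (C : Finset (Fin n)) (J : Finset (Fin m))
    (hJ : ∀ j ∈ J, wTally X C j false < wTally X C j true) :
    optCost X + ∑ j ∈ J, ((falseCount X j : ℝ) - min (trueCount X j : ℝ) (falseCount X j))
      ≤ wCost X C := by
  have hJ_cost : ∑ j ∈ J, wIssueCost X C j = ∑ j ∈ J, (falseCount X j : ℝ) :=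
    sum_congr rfl fun j hj => if_pos (hJ j hj)
  have hJc_cost : ∑ j ∈ Jᶜ, min (trueCount X j : ℝ) (falseCount X j)
      ≤ ∑ j ∈ Jᶜ, wIssueCost X C j :=
    sum_le_sum fun j _ => min_le_wIssueCost X C j
  rw [optCost_eq_sum_min, wCost_eq_sum_wIssueCost, ← sum_add_sum_compl J, ← sum_add_sum_compl J]
  push_cast
  rw [sum_sub_distrib, hJ_cost]
  linarith

theorem optCost_le_wCost (C : Finset (Fin n)) : (optCost X : ℝ) ≤ wCost X C := by
  simpa using optCost_add_sum_le_wCost X C ∅ (by simp)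

theorem closestSet_subset (C : Finset (Fin n)) (i : Fin n) : closestSet X C i ⊆ C :=
  filter_subset _ _

theorem closestSet_nonempty {C : Finset (Fin n)} (hC : C.Nonempty) (i : Fin n) :
    (closestSet X C i).Nonempty := by
  obtain ⟨c, hc, hmin⟩ := C.exists_min_image (fun c => hamming (X i) (X c)) hC
  exact ⟨c, mem_filter.2 ⟨hc, hmin⟩⟩

theorem sum_wWeight {C : Finset (Fin n)} (hC : C.Nonempty) : ∑ c ∈ C, wWeight X C c = n := by
  have hvoter (i : Fin n) :
      ∑ c ∈ C, (if c ∈ closestSet X C i then 1 / (#(closestSet X C i) : ℝ) else 0) = 1 := by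
    have := (closestSet_nonempty X hC i).card_pos
    rw [sum_ite_mem, inter_eq_right.2 (closestSet_subset X C i), sum_const, nsmul_eq_mul]
    field_simp
  simp only [wWeight]
  rw [sum_comm]
  simp only [hvoter, sum_const, card_univ, Fintype.card_fin, nsmul_eq_mul, mul_one]

theorem wTally_true_add_wTally_false {C : Finset (Fin n)} (hC : C.Nonempty) (j : Fin m) :
    wTally X C j true + wTally X C j false = n := by
  rw [← sum_wWeight X hC, wTally, wTally, ← sum_filter_add_sum_filter_not C (fun c => X c j = true)]
  simp

theorem closestSet_eq_inter {C S : Finset (Fin n)} {i : Fin n} {δ : ℕ} (hS : (C ∩ S).Nonempty)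
    (hin : ∀ c ∈ C ∩ S, hamming (X i) (X c) = δ)
    (hout : ∀ c ∈ C, c ∉ S → δ < hamming (X i) (X c)) :
    closestSet X C i = C ∩ S := by
  obtain ⟨c₀, hc₀⟩ := hS
  ext c
  simp only [closestSet, mem_filter, mem_inter]
  constructor
  · rintro ⟨hc, hmin⟩
    refine ⟨hc, by_contra fun hcS => ?_⟩
    have hle := hmin c₀ (mem_inter.1 hc₀).1
    have hlt := hout c hc hcS
    rw [hin c₀ hc₀] at hle
    omega
  · rintro ⟨hc, hcS⟩
    refine ⟨hc, fun c' hc' => ?_⟩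
    rw [hin c (mem_inter.2 ⟨hc, hcS⟩)]
    by_cases hc'S : c' ∈ S
    · rw [hin c' (mem_inter.2 ⟨hc', hc'S⟩)]
    · exact (hout c' hc' hc'S).le

end Costs

structure IsUnanimousHub {n m : ℕ} (X : Fin n → Fin m → Bool) (Q : Finset (Fin n)) : Prop where
  unanimous : ∀ q ∈ Q, ∀ q' ∈ Q, X q = X q'
  separated : ∀ p ∉ Q, ∀ c ≠ p, 0 < hamming (X p) (X c)
  closer : ∀ p ∉ Q, ∀ q ∈ Q, ∀ p' ∉ Q, p' ≠ p → hamming (X p) (X q) < hamming (X p) (X p')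

namespace IsUnanimousHub

variable {n m : ℕ} {X : Fin n → Fin m → Bool} {Q C : Finset (Fin n)}

theorem closestSet_eq_singleton (hX : IsUnanimousHub X Q) {p : Fin n} (hpC : p ∈ C)
    (hpQ : p ∉ Q) : closestSet X C p = {p} := by
  rw [closestSet_eq_inter X (S := {p}) (δ := 0) ⟨p, by simpa⟩, inter_singleton_of_mem hpC]
  · intro c hc
    rw [(mem_singleton.1 (mem_inter.1 hc).2), hamming_self]
  · intro c _ hcp
    exact hX.separated p hpQ c (by simpa using hcp)

theorem closestSet_eq_inter_hub (hX : IsUnanimousHub X Q) (hCQ : (C ∩ Q).Nonempty) {i : Fin n}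
    (hi : i ∈ Q ∨ i ∉ C) : closestSet X C i = C ∩ Q := by
  obtain ⟨q₀, hq₀⟩ := hCQ
  have hq₀Q := (mem_inter.1 hq₀).2
  refine closestSet_eq_inter X ⟨q₀, hq₀⟩ (δ := hamming (X i) (X q₀)) ?_ ?_
  · intro c hc
    rw [hX.unanimous c (mem_inter.1 hc).2 q₀ hq₀Q]
  · intro c hcC hcQ
    by_cases hiQ : i ∈ Q
    · rw [hX.unanimous i hiQ q₀ hq₀Q, hamming_self, hamming_comm,
        ← hX.unanimous i hiQ q₀ hq₀Q]
      exact hX.separated c hcQ i (by rintro rfl; exact hcQ hiQ)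
    · have hiC : i ∉ C := hi.resolve_left hiQ
      exact hX.closer i hiQ q₀ hq₀Q c hcQ (by rintro rfl; exact hiC hcC)

theorem wWeight_eq_one (hX : IsUnanimousHub X Q) (hCQ : (C ∩ Q).Nonempty) {p : Fin n}
    (hpC : p ∈ C) (hpQ : p ∉ Q) : wWeight X C p = 1 := by
  rw [wWeight, sum_eq_single p, hX.closestSet_eq_singleton hpC hpQ]
  · simp
  · intro i _ hip
    rw [if_neg]
    by_cases hi : i ∈ C ∧ i ∉ Q
    · rw [hX.closestSet_eq_singleton hi.1 hi.2, mem_singleton]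
      exact fun h => hip h.symm
    · rw [hX.closestSet_eq_inter_hub hCQ (by tauto), mem_inter]
      exact fun h => hpQ h.2
  · simp

theorem wTally_false_lt_true (hX : IsUnanimousHub X Q) (hCQ : (C ∩ Q).Nonempty)
    (hC : 2 * #C < n) {j : Fin m} (hQj : ∀ q ∈ Q, X q j = true) :
    wTally X C j false < wTally X C j true := by
  have hfalse : wTally X C j false = #(C.filter fun c => X c j = false) := by
    rw [wTally, card_eq_sum_ones, Nat.cast_sum]
    refine sum_congr rfl fun c hc => ?_
    obtain ⟨hcC, hcj⟩ := mem_filter.1 hc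
    rw [hX.wWeight_eq_one hCQ hcC fun hcQ => by simp [hQj c hcQ] at hcj, Nat.cast_one]
  have hcard : (2 * #(C.filter fun c => X c j = false) : ℝ) < n := by
    exact_mod_cast (Nat.mul_le_mul_left 2 (card_filter_le _ _)).trans_lt hC
  have htotal := wTally_true_add_wTally_false X (hCQ.mono inter_subset_left) j
  linarith

end IsUnanimousHub

theorem le_wSortitionCost {n m k : ℕ} (X : Fin n → Fin m → Bool) (Q : Finset (Fin n)) (L : ℝ)
    (hk : k ≤ n) (hL : ∀ C : Finset (Fin n), #C = k → (C ∩ Q).Nonempty → optCost X + L ≤ wCost X C) :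
    optCost X + (1 - ((n - #Q).choose k : ℝ) / n.choose k) * L ≤ wSortitionCost k X := by
  set S := powersetCard k (univ : Finset (Fin n))
  have hmiss : #(S.filter fun C => ¬ (C ∩ Q).Nonempty) = (n - #Q).choose k := by
    have hcompl : n - #Q = #Qᶜ := by rw [card_compl, Fintype.card_fin]
    rw [hcompl, ← card_powersetCard]
    congr 1
    ext C
    simp [S, not_nonempty_iff_eq_empty, ← disjoint_iff_inter_eq_empty, subset_compl_iff_disjoint_right]
    tauto
  have hsplit := card_filter_add_card_filter_not (s := S) (p := fun C => (C ∩ Q).Nonempty)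
  rw [hmiss, card_powersetCard, card_univ, Fintype.card_fin] at hsplit
  have hbound : ∑ C ∈ S, (if (C ∩ Q).Nonempty then (optCost X : ℝ) + L else optCost X)
      ≤ ∑ C ∈ S, wCost X C :=
    sum_le_sum fun C hC => by
      split_ifs with hCQ
      · exact hL C (mem_powersetCard.1 hC).2 hCQ
      · exact optCost_le_wCost X C
  rw [sum_ite, sum_const, sum_const, nsmul_eq_mul, nsmul_eq_mul, hmiss] at hbound
  have hN : (0 : ℝ) < n.choose k := by exact_mod_cast Nat.choose_pos hk
  have hsplitR : ((#(S.filter fun C => (C ∩ Q).Nonempty) : ℕ) : ℝ) + (n - #Q).choose k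
      = n.choose k := by exact_mod_cast hsplit
  have hexpand : (optCost X + (1 - ((n - #Q).choose k : ℝ) / n.choose k) * L) * n.choose k
      = (n.choose k - (n - #Q).choose k) * (optCost X + L) + (n - #Q).choose k * optCost X := by
    field_simp
    ring
  rw [wSortitionCost, le_div_iff₀ hN, hexpand, ← hsplitR]
  linarith

theorem Nat.pow_mul_choose_le_pow_mul_choose {a b : ℕ} (hab : a ≤ b) (k : ℕ) :
    b ^ k * a.choose k ≤ a ^ k * b.choose k := by
  induction k with
  | zero => simp
  | succ k ih =>
    have hstep : b * (a - k) ≤ a * (b - k) := by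
      rcases le_total k a with hka | hak
      · zify [hka, hka.trans hab]
        nlinarith
      · simp [Nat.sub_eq_zero_of_le hak]
    refine Nat.le_of_mul_le_mul_right (?_ : _ * (k + 1) ≤ _ * (k + 1)) k.succ_pos
    calc b ^ (k + 1) * a.choose (k + 1) * (k + 1)
        = b ^ k * a.choose k * (b * (a - k)) := by
          rw [mul_assoc, Nat.choose_succ_right_eq]; ring
      _ ≤ a ^ k * b.choose k * (a * (b - k)) := Nat.mul_le_mul ih hstep
      _ = a ^ (k + 1) * b.choose (k + 1) * (k + 1) := by
          rw [mul_assoc (a ^ (k + 1)), Nat.choose_succ_right_eq]; ring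

theorem choose_div_choose_le_pow {a b k : ℕ} (hab : a ≤ b) (hk : k ≤ b) :
    (a.choose k : ℝ) / b.choose k ≤ ((a : ℝ) / b) ^ k := by
  rcases Nat.eq_zero_or_pos b with rfl | hb
  · obtain rfl : k = 0 := by omega
    simp
  have hchoose : (0 : ℝ) < b.choose k := by exact_mod_cast Nat.choose_pos hk
  rw [div_pow, div_le_div_iff₀ hchoose (by positivity), mul_comm]
  exact_mod_cast Nat.pow_mul_choose_le_pow_mul_choose hab k

theorem card_filter_fst_eq {α β : Type*} [Fintype α] [Fintype β] [DecidableEq α] (a : α) :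
    #{x : α × β | a = x.1} = Fintype.card β := by
  rw [show ({x : α × β | a = x.1} : Finset _) = {a} ×ˢ univ by ext ⟨x, y⟩; simp [eq_comm]]
  simp

section HubProfile

variable {s d : ℕ}

abbrev HubVoter (s : ℕ) := Fin (3 * s) ⊕ Fin s

abbrev HubIssue (s d : ℕ) := Fin (3 * s) × Fin (d + 1) ⊕ Fin d

def hubPref : HubVoter s → HubIssue s d → Bool
  | .inl a, .inl (p, _) => a = p
  | .inr _, .inr _ => true
  | _, _ => false

def hubProfile (s d : ℕ) : Fin (3 * s + s) → Fin (Fintype.card (HubIssue s d)) → Bool :=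
  fun i j => hubPref (finSumFinEquiv.symm i) ((Fintype.equivFin _).symm j)

def hubVoters (s : ℕ) : Finset (Fin (3 * s + s)) :=
  {i | (finSumFinEquiv.symm i).isRight}

theorem mem_hubVoters {i : Fin (3 * s + s)} :
    i ∈ hubVoters s ↔ ∃ q, finSumFinEquiv.symm i = .inr q := by
  simp [hubVoters, Sum.isRight_iff]

theorem not_mem_hubVoters {i : Fin (3 * s + s)} :
    i ∉ hubVoters s ↔ ∃ a, finSumFinEquiv.symm i = .inl a := by
  simp [hubVoters, Sum.isLeft_iff]

theorem card_hubVoters : #(hubVoters s) = s := by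
  rw [hubVoters, card_equiv finSumFinEquiv.symm (t := {v : HubVoter s | v.isRight}) (by simp),
    card_filter, Fintype.sum_sum_type]
  simp

theorem hamming_hubProfile (i i' : Fin (3 * s + s)) :
    hamming (hubProfile s d i) (hubProfile s d i')
      = #{t : HubIssue s d | hubPref (finSumFinEquiv.symm i) t ≠ hubPref (finSumFinEquiv.symm i') t} := by
  unfold hamming
  refine card_equiv (Fintype.equivFin _).symm fun j => ?_
  simp only [mem_filter, mem_univ, true_and]
  simp [hubProfile]

theorem card_hubPref_ne_inl_inl {a a' : Fin (3 * s)} (h : a ≠ a') :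
    #{t : HubIssue s d | hubPref (.inl a) t ≠ hubPref (.inl a') t} = 2 * (d + 1) := by
  have hsplit (p : Fin (3 * s)) : (if a = p ↔ a' = p then 0 else 1)
      = (if a = p then 1 else 0) + (if a' = p then 1 else 0) := by
    by_cases a = p <;> by_cases a' = p <;> simp_all
  rw [card_filter]
  simp [Fintype.sum_sum_type, hubPref, hsplit, sum_add_distrib, card_filter_fst_eq, two_mul]

theorem card_hubPref_ne_inl_inr (a : Fin (3 * s)) (q : Fin s) :
    #{t : HubIssue s d | hubPref (.inl a) t ≠ hubPref (.inr q) t} = 2 * d + 1 := by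
  rw [card_filter]
  simp [Fintype.sum_sum_type, hubPref, card_filter_fst_eq, two_mul, add_right_comm]

theorem isUnanimousHub_hubProfile : IsUnanimousHub (hubProfile s d) (hubVoters s) where
  unanimous q hq q' hq' := by
    obtain ⟨b, hb⟩ := mem_hubVoters.1 hq
    obtain ⟨b', hb'⟩ := mem_hubVoters.1 hq'
    funext j
    simp only [hubProfile, hb, hb']
    generalize (Fintype.equivFin _).symm j = t
    rcases t with _ | _ <;> rfl
  separated p hp c hcp := by
    obtain ⟨a, ha⟩ := not_mem_hubVoters.1 hp
    rw [hamming_hubProfile, ha]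
    rcases hc : finSumFinEquiv.symm c with a' | q
    · have haa' : a ≠ a' := fun h => hcp (finSumFinEquiv.symm.injective (by rw [hc, ha, h]))
      rw [card_hubPref_ne_inl_inl haa']
      omega
    · rw [card_hubPref_ne_inl_inr]
      omega
  closer p hp q hq p' hp' hne := by
    obtain ⟨a, ha⟩ := not_mem_hubVoters.1 hp
    obtain ⟨b, hb⟩ := mem_hubVoters.1 hq
    obtain ⟨a', ha'⟩ := not_mem_hubVoters.1 hp'
    have haa' : a ≠ a' := fun h => hne (finSumFinEquiv.symm.injective (by rw [ha, ha', h]))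
    rw [hamming_hubProfile, hamming_hubProfile, ha, hb, ha', card_hubPref_ne_inl_inr,
      card_hubPref_ne_inl_inl haa']
    omega

theorem trueCount_hubProfile (t : HubIssue s d) :
    trueCount (hubProfile s d) (Fintype.equivFin _ t) = #{v | hubPref v t = true} := by
  unfold trueCount
  refine card_equiv finSumFinEquiv.symm fun i => ?_
  simp only [mem_filter, mem_univ, true_and]
  simp [hubProfile]

theorem trueCount_hubProfile_inl (x : Fin (3 * s) × Fin (d + 1)) :
    trueCount (hubProfile s d) (Fintype.equivFin _ (.inl x)) = 1 := by
  rw [trueCount_hubProfile, card_filter]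
  simp [Fintype.sum_sum_type, hubPref]

theorem trueCount_hubProfile_inr (r : Fin d) :
    trueCount (hubProfile s d) (Fintype.equivFin _ (.inr r)) = s := by
  rw [trueCount_hubProfile, card_filter]
  simp [Fintype.sum_sum_type, hubPref]

theorem falseCount_hubProfile_inl (x : Fin (3 * s) × Fin (d + 1)) :
    falseCount (hubProfile s d) (Fintype.equivFin _ (.inl x)) = 3 * s + s - 1 := by
  have := trueCount_add_falseCount (hubProfile s d) (Fintype.equivFin _ (.inl x))
  rw [trueCount_hubProfile_inl] at this
  omega

theorem falseCount_hubProfile_inr (r : Fin d) :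
    falseCount (hubProfile s d) (Fintype.equivFin _ (.inr r)) = 3 * s := by
  have := trueCount_add_falseCount (hubProfile s d) (Fintype.equivFin _ (.inr r))
  rw [trueCount_hubProfile_inr] at this
  omega

theorem optCost_hubProfile (hs : 0 < s) : optCost (hubProfile s d) = s * (4 * d + 3) := by
  rw [optCost_eq_sum_min, ← (Fintype.equivFin _).sum_comp, Fintype.sum_sum_type]
  simp only [trueCount_hubProfile_inl, trueCount_hubProfile_inr, falseCount_hubProfile_inl,
    falseCount_hubProfile_inr, sum_const, card_univ, Fintype.card_prod, Fintype.card_fin, smul_eq_mul]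
  rw [min_eq_left (by omega), min_eq_left (by omega)]
  ring

theorem le_wCost_hubProfile {C : Finset (Fin (3 * s + s))} (hC : 2 * #C < 3 * s + s)
    (hCQ : (C ∩ hubVoters s).Nonempty) :
    optCost (hubProfile s d) + 2 * s * d ≤ wCost (hubProfile s d) C := by
  set J : Finset (Fin (Fintype.card (HubIssue s d))) :=
    univ.map (Function.Embedding.inr.trans (Fintype.equivFin _).toEmbedding)
  have hJ : ∀ j ∈ J, wTally (hubProfile s d) C j false < wTally (hubProfile s d) C j true := by
    intro j hj
    obtain ⟨r, -, rfl⟩ := mem_map.1 hj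
    refine isUnanimousHub_hubProfile.wTally_false_lt_true hCQ hC fun q hq => ?_
    obtain ⟨b, hb⟩ := mem_hubVoters.1 hq
    simp [hubProfile, hb, hubPref]
  have hsum : ∑ j ∈ J, ((falseCount (hubProfile s d) j : ℝ)
      - min (trueCount (hubProfile s d) j : ℝ) (falseCount (hubProfile s d) j)) = 2 * s * d := by
    simp only [J, sum_map, Function.Embedding.trans_apply, Function.Embedding.inr_apply,
      Equiv.coe_toEmbedding, trueCount_hubProfile_inr, falseCount_hubProfile_inr, sum_const,
      card_univ, Fintype.card_fin, nsmul_eq_mul]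
    push_cast
    rw [min_eq_left (by linarith [(s.cast_nonneg : (0 : ℝ) ≤ s)])]
    ring
  simpa [hsum] using optCost_add_sum_le_wCost (hubProfile s d) C J hJ

end HubProfile

theorem le_wSortitionCost_hubProfile {s d k : ℕ} (hk : k < 2 * s) :
    (s * (4 * d + 3) : ℝ) + (1 - ((3 * s).choose k : ℝ) / (3 * s + s).choose k) * (2 * s * d)
      ≤ wSortitionCost k (hubProfile s d) := by
  have hcost := le_wSortitionCost (k := k) (hubProfile s d) (hubVoters s) (2 * s * d) (by omega)
    fun _ _ hCQ => le_wCost_hubProfile (by omega) hCQ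
  rw [optCost_hubProfile (by omega), card_hubVoters, Nat.add_sub_cancel] at hcost
  exact_mod_cast hcost

theorem lt_ratio_hubProfile {k d : ℕ} (hk : 1 ≤ k) {ε : ℝ} (hdε : 1 ≤ d * ε) :
    3 / 2 - (1 / 2) * (3 / 4 : ℝ) ^ k - ε
      < ratio (wSortitionCost k (hubProfile k d)) (optCost (hubProfile k d)) := by
  have hρ : ((3 * k).choose k : ℝ) / (3 * k + k).choose k ≤ (3 / 4) ^ k := by
    convert choose_div_choose_le_pow (a := 3 * k) (b := 3 * k + k) (k := k) (by omega) (by omega)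
      using 2
    push_cast
    field_simp
    ring
  have hε : 0 < ε := pos_of_mul_pos_right (by linarith) d.cast_nonneg
  have hgap : (3 / 2 - 1 / 2 * (3 / 4 : ℝ) ^ k - ε) * (4 * d + 3)
      < 4 * d + 3 + (1 - (3 / 4) ^ k) * (2 * d) := by
    have : (0 : ℝ) < (3 / 4) ^ k := by positivity
    linarith
  have hk' : (0 : ℝ) < k := by exact_mod_cast hk
  have hopt : (optCost (hubProfile k d) : ℝ) = k * (4 * d + 3) := by
    rw [optCost_hubProfile (by omega)]; push_cast; ring
  have hopt_pos : (0 : ℝ) < optCost (hubProfile k d) := by rw [hopt]; positivity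
  rw [ratio, if_neg (by exact_mod_cast hopt_pos.ne'), lt_div_iff₀ hopt_pos, hopt]
  calc (3 / 2 - 1 / 2 * (3 / 4) ^ k - ε) * (k * (4 * d + 3))
      < k * (4 * d + 3) + (1 - (3 / 4) ^ k) * (2 * k * d) := by
        linarith [mul_lt_mul_of_pos_left hgap hk']
    _ ≤ k * (4 * d + 3) + (1 - ((3 * k).choose k : ℝ) / (3 * k + k).choose k) * (2 * k * d) := by
      gcongr
    _ ≤ wSortitionCost k (hubProfile k d) := le_wSortitionCost_hubProfile (by omega)

theorem stmt15 (k : ℕ) (hk : 1 ≤ k) :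
    (∀ ε : ℝ, 0 < ε → ∃ (n m : ℕ) (X : Fin n → Fin m → Bool),
      3 / 2 - (1 / 2) * (3 / 4 : ℝ) ^ k - ε < ratio (wSortitionCost k X) (optCost X)) ∧
    (9 / 8 : ℝ) ≤ 3 / 2 - (1 / 2) * (3 / 4 : ℝ) ^ k := by
  refine ⟨fun ε hε => ⟨_, _, hubProfile k ⌈ε⁻¹⌉₊, lt_ratio_hubProfile hk ?_⟩, ?_⟩
  · calc 1 = ε⁻¹ * ε := (inv_mul_cancel₀ hε.ne').symm
      _ ≤ ⌈ε⁻¹⌉₊ * ε := by gcongr; exact Nat.le_ceil _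
  · have : (3 / 4 : ℝ) ^ k ≤ 3 / 4 := pow_le_of_le_one (by norm_num) (by norm_num) (by omega)
    linarith

end
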